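/- arXiv:1204.4693 — 4 statements merged into one kernel-verified Lean document; each statement's English description precedes it below -/
import Mathlib

section
/- The matrix multiplication tensor M⟨2⟩ for 2×2 matrices has tensor rank at most 7 (Strassen's algorithm). -/
open TensorProduct BigOperators

noncomputable section

/-- Rank of an order-3 tensor. -/
def tRank (k : Type*) [Field k] {A B C : Type*} [AddCommGroup A] [Module k A]
    [AddCommGroup B] [Module k B] [AddCommGroup C] [Module k C]
    (T : A ⊗[k] (B ⊗[k] C)) : ℕ :=
  sInf {r | ∃ (a : Fin r → A) (b : Fin r → B) (c : Fin r → C),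
    T = ∑ i, a i ⊗ₜ[k] (b i ⊗ₜ[k] c i)}

/-- Flattening of `A ⊗ M` to a linear map `A* → M`. -/
def flatten (k : Type*) [Field k] {A M : Type*} [AddCommGroup A] [Module k A]
    [AddCommGroup M] [Module k M] : A ⊗[k] M →ₗ[k] Module.Dual k A →ₗ[k] M :=
  (dualTensorHom k (Module.Dual k A) M).comp
    (TensorProduct.map (Module.Dual.eval k A) LinearMap.id)

variable (k : Type*) [Field k] {A B C : Type*} [AddCommGroup A] [Module k A]
    [AddCommGroup B] [Module k B] [AddCommGroup C] [Module k C]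

def rankA (T : A ⊗[k] (B ⊗[k] C)) : ℕ :=
  Module.finrank k (LinearMap.range (flatten k T))

def rankB (T : A ⊗[k] (B ⊗[k] C)) : ℕ :=
  Module.finrank k (LinearMap.range (flatten k ((TensorProduct.leftComm k A B C) T)))

def rankC (T : A ⊗[k] (B ⊗[k] C)) : ℕ :=
  Module.finrank k (LinearMap.range (flatten k ((TensorProduct.leftComm k A C B)
    ((TensorProduct.congr (LinearEquiv.refl k A) (TensorProduct.comm k B C)) T))))

/-- The coordinate functional `X ↦ X i j` on `n × n` matrices. -/
def entryDual (n : ℕ) (i j : Fin n) : Module.Dual ℂ (Matrix (Fin n) (Fin n) ℂ) where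
  toFun X := X i j
  map_add' _ _ := rfl
  map_smul' _ _ := rfl

/-- The matrix multiplication tensor `M⟨n⟩ ∈ (ℂⁿˣⁿ)* ⊗ (ℂⁿˣⁿ)* ⊗ ℂⁿˣⁿ`, the tensor of the
bilinear map `(X, Y) ↦ X * Y`. -/
def MMT (n : ℕ) : Module.Dual ℂ (Matrix (Fin n) (Fin n) ℂ) ⊗[ℂ]
    (Module.Dual ℂ (Matrix (Fin n) (Fin n) ℂ) ⊗[ℂ] Matrix (Fin n) (Fin n) ℂ) :=
  ∑ i : Fin n, ∑ j : Fin n, ∑ l : Fin n,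
    entryDual n i j ⊗ₜ[ℂ] (entryDual n j l ⊗ₜ[ℂ] Matrix.single i l 1)

/-!
Strassen's algorithm computes `XY` for `2 × 2` matrices from the seven products
`Mᵢ = αᵢ(X) βᵢ(Y)` of the linear forms `αᵢ = Strassen.left i`, `βᵢ = Strassen.right i`, via
`(XY)₁₁ = M₁ + M₄ - M₅ + M₇`, `(XY)₁₂ = M₃ + M₅`, `(XY)₂₁ = M₂ + M₄`, `(XY)₂₂ = M₁ - M₂ + M₃ + M₆`
(indices from 1 here, from `0` in `Fin`). Read as tensors, this writes `M⟨2⟩` as the sum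
of the seven rank-one tensors `αᵢ ⊗ βᵢ ⊗ γᵢ`, where `γᵢ = Strassen.output i` records the entries of
`XY` in which `Mᵢ` occurs.
-/

theorem tRank_le_of_eq_sum {r : ℕ} {T : A ⊗[k] (B ⊗[k] C)} (a : Fin r → A) (b : Fin r → B)
    (c : Fin r → C) (h : T = ∑ i, a i ⊗ₜ[k] (b i ⊗ₜ[k] c i)) : tRank k T ≤ r :=
  Nat.sInf_le ⟨a, b, c, h⟩

namespace Strassen

local notation "x" => entryDual 2
local notation "E" i:max j:max => (Matrix.single i j 1 : Matrix (Fin 2) (Fin 2) ℂ)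

def left : Fin 7 → Module.Dual ℂ (Matrix (Fin 2) (Fin 2) ℂ) :=
  ![x 0 0 + x 1 1, x 1 0 + x 1 1, x 0 0, x 1 1, x 0 0 + x 0 1, x 1 0 - x 0 0, x 0 1 - x 1 1]

def right : Fin 7 → Module.Dual ℂ (Matrix (Fin 2) (Fin 2) ℂ) :=
  ![x 0 0 + x 1 1, x 0 0, x 0 1 - x 1 1, x 1 0 - x 0 0, x 1 1, x 0 0 + x 0 1, x 1 0 + x 1 1]

def output : Fin 7 → Matrix (Fin 2) (Fin 2) ℂ :=
  ![E 0 0 + E 1 1, E 1 0 - E 1 1, E 0 1 + E 1 1, E 0 0 + E 1 0, E 0 1 - E 0 0, E 1 1, E 0 0]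

end Strassen

theorem MMT_two_eq_strassen :
    MMT 2 = ∑ i, Strassen.left i ⊗ₜ[ℂ] (Strassen.right i ⊗ₜ[ℂ] Strassen.output i) := by
  simp only [MMT, Strassen.left, Strassen.right, Strassen.output, Fin.sum_univ_succ,
    Fin.sum_univ_zero, Fin.succ_zero_eq_one, Matrix.cons_val_zero, Matrix.cons_val_succ,
    add_tmul, tmul_add, sub_tmul, tmul_sub]
  abel_nf

/-- Strassen: the `2×2` matrix multiplication tensor has rank at most `7`. -/
theorem MMT_two_rank_le_seven : tRank ℂ (MMT 2) ≤ 7 :=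
  tRank_le_of_eq_sum ℂ _ _ _ MMT_two_eq_strassen
end
end

section
/- Strassen's equations give a lower bound: for T ∈ C^3 ⊗ B ⊗ C with B, C of dimension m, writing T = Σ_{i=1}^3 e_i ⊗ X_i with X_i m×m matrices and X_1 invertible, the border rank of T is at least m + (1/2) rank(X_1^{-1}X_2 X_1^{-1}X_3 − X_1^{-1}X_3 X_1^{-1}X_2). -/
open TensorProduct BigOperators

noncomputable section

variable (k : Type*) [Field k] {A B C : Type*} [AddCommGroup A] [Module k A]
    [AddCommGroup B] [Module k B] [AddCommGroup C] [Module k C]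

open Filter Topology

variable (m : ℕ)

abbrev V (m : ℕ) := Fin m → ℂ
abbrev T3mm (m : ℕ) := V 3 ⊗[ℂ] (V m ⊗[ℂ] V m)

/-- The standard monomial basis of `ℂ³ ⊗ ℂᵐ ⊗ ℂᵐ`. -/
def bb (m : ℕ) : Module.Basis (Fin 3 × Fin m × Fin m) ℂ (T3mm m) :=
  (Pi.basisFun ℂ (Fin 3)).tensorProduct
    ((Pi.basisFun ℂ (Fin m)).tensorProduct (Pi.basisFun ℂ (Fin m)))

/-- Border rank: the least `r` such that `T` is a (coordinatewise) limit of tensors of rank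
at most `r`. -/
def borderRank (T : T3mm m) : ℕ :=
  sInf {r | ∃ g : ℕ → T3mm m, (∀ l, tRank ℂ (g l) ≤ r) ∧
    ∀ p, Tendsto (fun l => (bb m).repr (g l) p) atTop (𝓝 ((bb m).repr T p))}

/-- The tensor in `ℂᵐ ⊗ ℂᵐ` associated to an `m×m` matrix. -/
def matToTensor (X : Matrix (Fin m) (Fin m) ℂ) : V m ⊗[ℂ] V m :=
  ∑ j : Fin m, ∑ l : Fin m, X j l • (Pi.single j 1 ⊗ₜ[ℂ] Pi.single l 1)

/-!
If `T = ∑ᵢ aᵢ ⊗ bᵢ ⊗ cᵢ` has `n` terms, its slices are `Xₖ = B Dₖ C` with `B : m × n`,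
`C : n × m` and `Dₖ` diagonal. When `X₀` and `D₀` are invertible, `Q = C X₀⁻¹ B D₀` is an
idempotent of rank at least `m`, so `N = 1 - Q` has rank at most `n - m`, and since diagonal
matrices commute, `X₁ X₀⁻¹ X₂ - X₂ X₀⁻¹ X₁ = B (D₂ N D₀⁻¹ D₁ - D₁ N D₀⁻¹ D₂) C` has rank at most
`2 (n - m)`. Written with the adjugate of `X₀` in place of its inverse, this commutator is
continuous in the slices, and matrix rank is lower semicontinuous; so the bound survives the
perturbation `D₀ ↦ D₀ + ε` that removes zero entries of `D₀`, and then the passage from rank to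
border rank.
-/

open Matrix

namespace Matrix

variable {m n : Type*} [Fintype n] {K : Type*} [Field K]

theorem rank_sub_le (A B : Matrix m n K) : (A - B).rank ≤ A.rank + B.rank := by
  have : LinearMap.range (A - B).mulVecLin ≤
      LinearMap.range A.mulVecLin ⊔ LinearMap.range B.mulVecLin := by
    rintro _ ⟨x, rfl⟩
    rw [mulVecLin_apply, sub_mulVec]
    exact Submodule.sub_mem_sup (LinearMap.mem_range_self _ x) (LinearMap.mem_range_self _ x)
  exact (Submodule.finrank_mono this).trans (Submodule.finrank_add_le_finrank_add_finrank _ _)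

variable [Fintype m]

theorem exists_mul_mul_eq_one (A : Matrix m n K) :
    ∃ (P : Matrix (Fin A.rank) m K) (Q : Matrix n (Fin A.rank) K), P * A * Q = 1 := by
  classical
  set R := LinearMap.range A.mulVecLin
  let e : R ≃ₗ[K] (Fin A.rank → K) := (Module.finBasis K R).equivFun
  obtain ⟨π, hπ⟩ := R.subtype.exists_leftInverse_of_injective R.ker_subtype
  obtain ⟨σ, hσ⟩ := A.mulVecLin.rangeRestrict.exists_rightInverse_of_surjective
    (LinearMap.range_rangeRestrict _)
  refine ⟨LinearMap.toMatrix' (e.toLinearMap ∘ₗ π),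
    LinearMap.toMatrix' (σ ∘ₗ e.symm.toLinearMap), ?_⟩
  have : (e.toLinearMap ∘ₗ π) ∘ₗ toLin' A ∘ₗ (σ ∘ₗ e.symm.toLinearMap) = LinearMap.id := by
    refine LinearMap.ext fun x => ?_
    have hσx := LinearMap.congr_fun hσ (e.symm x)
    have hπx := LinearMap.congr_fun hπ (A.mulVecLin.rangeRestrict (σ (e.symm x)))
    simp only [LinearMap.comp_apply, LinearMap.id_apply] at hσx hπx
    show e (π (R.subtype (A.mulVecLin.rangeRestrict (σ (e.symm x))))) = x
    rw [hπx, hσx, LinearEquiv.apply_symm_apply]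
  simpa only [LinearMap.toMatrix'_comp, LinearMap.toMatrix'_toLin', LinearMap.toMatrix'_id,
    Matrix.mul_assoc] using congrArg LinearMap.toMatrix' this

theorem eventually_nhds_rank_le [TopologicalSpace K] [IsTopologicalRing K] [T1Space K]
    (A : Matrix m n K) : ∀ᶠ B in 𝓝 A, A.rank ≤ B.rank := by
  obtain ⟨P, Q, hPQ⟩ := A.exists_mul_mul_eq_one
  have hcont : Continuous fun B : Matrix m n K => (P * B * Q).det :=
    ((continuous_const.matrix_mul continuous_id).matrix_mul continuous_const).matrix_det
  have hdet : ∀ᶠ B in 𝓝 A, (P * B * Q).det ≠ 0 :=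
    hcont.continuousAt.eventually_ne (by simp [hPQ])
  filter_upwards [hdet] with B hB
  calc A.rank = (P * B * Q).rank := by
        rw [rank_of_isUnit _ ((isUnit_iff_isUnit_det _).2 hB.isUnit), Fintype.card_fin]
    _ ≤ (P * B).rank := rank_mul_le_left _ _
    _ ≤ B.rank := rank_mul_le_right _ _

end Matrix

section StrassenCommutator

variable {n R : Type*} [Fintype n] [DecidableEq n] [CommRing R]

def strassenCommutator (X₀ X₁ X₂ : Matrix n n R) : Matrix n n R :=
  X₁ * X₀.adjugate * X₂ - X₂ * X₀.adjugate * X₁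

theorem strassenCommutator_of_isUnit_det {X₀ : Matrix n n R} (h : IsUnit X₀.det)
    (X₁ X₂ : Matrix n n R) :
    strassenCommutator X₀ X₁ X₂ = X₀.det • (X₁ * X₀⁻¹ * X₂ - X₂ * X₀⁻¹ * X₁) := by
  have hadj : X₀.adjugate = X₀.det • X₀⁻¹ := by
    rw [← Matrix.mul_one X₀.adjugate, ← mul_nonsing_inv X₀ h, ← Matrix.mul_assoc,
      adjugate_mul, smul_mul, Matrix.one_mul]
  rw [strassenCommutator, hadj]
  simp only [Matrix.mul_smul, Matrix.smul_mul, smul_sub]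

theorem Continuous.strassenCommutator [TopologicalSpace R] [IsTopologicalRing R]
    {α : Type*} [TopologicalSpace α] {f g h : α → Matrix n n R} (hf : Continuous f)
    (hg : Continuous g) (hh : Continuous h) :
    Continuous fun x => strassenCommutator (f x) (g x) (h x) :=
  ((hg.matrix_mul hf.matrix_adjugate).matrix_mul hh).sub
    ((hh.matrix_mul hf.matrix_adjugate).matrix_mul hg)

variable {K : Type*} [Field K]

theorem rank_strassenCommutator_of_isUnit_det {X₀ : Matrix n n K} (h : IsUnit X₀.det)
    (X₁ X₂ : Matrix n n K) :
    (strassenCommutator X₀ X₁ X₂).rank = (X₁ * X₀⁻¹ * X₂ - X₂ * X₀⁻¹ * X₁).rank := by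
  rw [strassenCommutator_of_isUnit_det h,
    rank_smul_of_mem_nonZeroDivisors _ (mem_nonZeroDivisors_of_ne_zero h.ne_zero)]

theorem rank_strassenCommutator_eq_rank_commutator {X₀ : Matrix n n K} (h : IsUnit X₀.det)
    (X₁ X₂ : Matrix n n K) :
    (strassenCommutator X₀ X₁ X₂).rank
      = (X₀⁻¹ * X₁ * (X₀⁻¹ * X₂) - X₀⁻¹ * X₂ * (X₀⁻¹ * X₁)).rank := by
  rw [rank_strassenCommutator_of_isUnit_det h,
    ← rank_mul_eq_right_of_isUnit_det X₀⁻¹ _ (isUnit_nonsing_inv_det X₀ h)]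
  simp only [Matrix.mul_sub, Matrix.mul_assoc]

variable {l ι : Type*} [Fintype l] [DecidableEq l] [Fintype ι] [DecidableEq ι]

theorem rank_one_sub_mul_inv_mul_diagonal_add_le (B : Matrix l ι K) (C : Matrix ι l K)
    {u : ι → K} (h : IsUnit (B * diagonal u * C).det) :
    (1 - C * (B * diagonal u * C)⁻¹ * B * diagonal u).rank + Fintype.card l
      ≤ Fintype.card ι := by
  set X₀ := B * diagonal u * C
  set Q := C * X₀⁻¹ * B * diagonal u
  have hX₀ : X₀ * X₀⁻¹ = 1 := mul_nonsing_inv X₀ h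
  have hQQ : Q * Q = Q := by
    calc Q * Q = C * X₀⁻¹ * (X₀ * X₀⁻¹) * B * diagonal u := by
          simp only [Q, X₀, Matrix.mul_assoc]
      _ = Q := by rw [hX₀, Matrix.mul_one]
  have hrankQ : Fintype.card l ≤ Q.rank := by
    calc Fintype.card l = (X₀ * X₀⁻¹ * X₀).rank := by
          rw [hX₀, Matrix.one_mul, rank_of_isUnit X₀ ((isUnit_iff_isUnit_det _).2 h)]
      _ = (B * diagonal u * Q * C).rank := by simp only [Q, X₀, Matrix.mul_assoc]
      _ ≤ Q.rank := (rank_mul_le_left _ _).trans (rank_mul_le_right _ _)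
  have := rank_add_rank_le_card_of_mul_eq_zero
    (show Q * (1 - Q) = 0 by rw [Matrix.mul_sub, hQQ, Matrix.mul_one, sub_self])
  omega

theorem rank_strassenCommutator_diagonal_add_le_of_ne_zero (B : Matrix l ι K)
    (C : Matrix ι l K) {u : ι → K} (hu : ∀ i, u i ≠ 0) (h : IsUnit (B * diagonal u * C).det)
    (v w : ι → K) :
    (strassenCommutator (B * diagonal u * C) (B * diagonal v * C) (B * diagonal w * C)).rank
      + 2 * Fintype.card l ≤ 2 * Fintype.card ι := by
  rw [rank_strassenCommutator_of_isUnit_det h]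
  set W := (B * diagonal u * C)⁻¹
  set N := 1 - C * W * B * diagonal u
  have hN : N.rank + Fintype.card l ≤ Fintype.card ι :=
    rank_one_sub_mul_inv_mul_diagonal_add_le B C h
  have hsplit : ∀ v w : ι → K, B * diagonal v * C * W * (B * diagonal w * C)
      = B * diagonal (v * (u⁻¹ * w)) * C - B * diagonal v * N * diagonal (u⁻¹ * w) * C := by
    intro v w
    have huw : diagonal u * diagonal (u⁻¹ * w) = diagonal w := by
      rw [diagonal_mul_diagonal]; congr 1; ext i; simp [hu i]
    calc B * diagonal v * C * W * (B * diagonal w * C)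
        = B * diagonal v * (C * W * B * diagonal u) * diagonal (u⁻¹ * w) * C := by
          rw [← huw]; simp only [Matrix.mul_assoc]
      _ = B * diagonal v * (1 - N) * diagonal (u⁻¹ * w) * C := by rw [sub_sub_cancel]
      _ = _ := by
          rw [Matrix.mul_sub, Matrix.sub_mul, Matrix.sub_mul, Matrix.mul_one, Matrix.mul_assoc B,
            diagonal_mul_diagonal']
          rfl
  have hterm : ∀ v w : ι → K, (B * diagonal v * N * diagonal (u⁻¹ * w) * C).rank ≤ N.rank :=
    fun v w => (rank_mul_le_left _ _).trans ((rank_mul_le_left _ _).trans (rank_mul_le_right _ _))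
  have hcomm : v * (u⁻¹ * w) = w * (u⁻¹ * v) := by ring
  rw [hsplit v w, hsplit w v, hcomm, sub_sub_sub_cancel_left]
  have := rank_sub_le (B * diagonal w * N * diagonal (u⁻¹ * v) * C)
    (B * diagonal v * N * diagonal (u⁻¹ * w) * C)
  have := hterm w v
  have := hterm v w
  omega

theorem rank_strassenCommutator_diagonal_add_le {𝕜 : Type*} [NontriviallyNormedField 𝕜]
    (B : Matrix l ι 𝕜) (C : Matrix ι l 𝕜) {u : ι → 𝕜} (h : IsUnit (B * diagonal u * C).det)
    (v w : ι → 𝕜) :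
    (strassenCommutator (B * diagonal u * C) (B * diagonal v * C) (B * diagonal w * C)).rank
      + 2 * Fintype.card l ≤ 2 * Fintype.card ι := by
  set X₀ : 𝕜 → Matrix l l 𝕜 := fun ε => B * diagonal (fun i => u i + ε) * C
  have hX₀ : Continuous X₀ := by fun_prop
  have hX₀0 : X₀ 0 = B * diagonal u * C := by simp [X₀]
  have hsemi : ∀ᶠ ε in 𝓝 0,
      (strassenCommutator (X₀ 0) (B * diagonal v * C) (B * diagonal w * C)).rank
        ≤ (strassenCommutator (X₀ ε) (B * diagonal v * C) (B * diagonal w * C)).rank :=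
    ((hX₀.strassenCommutator continuous_const continuous_const).tendsto 0).eventually
      (eventually_nhds_rank_le _)
  have hdet : ∀ᶠ ε in 𝓝 0, (X₀ ε).det ≠ 0 :=
    hX₀.matrix_det.continuousAt.eventually_ne (by rw [hX₀0]; exact h.ne_zero)
  have hne : ∀ᶠ ε in 𝓝[≠] (0 : 𝕜), ∀ i, u i + ε ≠ 0 :=
    nhdsNE_le_cofinite 0 <| eventually_all.2 fun i => (eventually_cofinite_ne (-u i)).mono
      fun ε hε h0 => hε (eq_neg_of_add_eq_zero_right h0)
  obtain ⟨ε, ⟨hε, hεdet⟩, hεne⟩ :=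
    ((hsemi.and hdet).filter_mono nhdsWithin_le_nhds |>.and hne).exists
  rw [← hX₀0]
  exact (Nat.add_le_add_right hε _).trans
    (rank_strassenCommutator_diagonal_add_le_of_ne_zero B C hεne hεdet.isUnit v w)

end StrassenCommutator

theorem exists_sum_tmul_tmul_eq {R : Type*} [CommSemiring R] {A B C : Type*} [AddCommMonoid A]
    [Module R A] [AddCommMonoid B] [Module R B] [AddCommMonoid C] [Module R C]
    (T : A ⊗[R] (B ⊗[R] C)) :
    ∃ (n : ℕ) (a : Fin n → A) (b : Fin n → B) (c : Fin n → C),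
      T = ∑ i, a i ⊗ₜ[R] (b i ⊗ₜ[R] c i) := by
  obtain ⟨k, a, y, rfl⟩ := TensorProduct.exists_sum_tmul_eq T
  choose K b c hy using fun j => TensorProduct.exists_sum_tmul_eq (y j)
  refine ⟨_, fun i => a (finSigmaFinEquiv.symm i).1, fun i => b _ (finSigmaFinEquiv.symm i).2,
    fun i => c _ (finSigmaFinEquiv.symm i).2, ?_⟩
  rw [finSigmaFinEquiv.symm.sum_comp (fun p => a p.1 ⊗ₜ[R] (b _ p.2 ⊗ₜ[R] c _ p.2)),
    Fintype.sum_sigma]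
  simp_rw [← tmul_sum, ← hy]

section Slices

variable {m : ℕ}

def slices (T : T3mm m) (k : Fin 3) : Matrix (Fin m) (Fin m) ℂ :=
  Matrix.of fun i j => (bb m).repr T (k, i, j)

theorem bb_repr_tmul (a : V 3) (b c : V m) (p : Fin 3 × Fin m × Fin m) :
    (bb m).repr (a ⊗ₜ[ℂ] (b ⊗ₜ[ℂ] c)) p = a p.1 * (b p.2.1 * c p.2.2) := by
  obtain ⟨k, i, j⟩ := p
  simp only [bb, Module.Basis.tensorProduct_repr_tmul_apply, Pi.basisFun_repr, smul_eq_mul]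
  ring

theorem slices_sum_tmul {n : ℕ} (a : Fin n → V 3) (b c : Fin n → V m) (k : Fin 3) :
    slices (∑ i, a i ⊗ₜ[ℂ] (b i ⊗ₜ[ℂ] c i)) k
      = (Matrix.of b)ᵀ * diagonal (fun i => a i k) * Matrix.of c := by
  ext x y
  rw [mul_apply]
  simp only [slices, map_sum, Finsupp.coe_finsetSum, Finset.sum_apply, bb_repr_tmul, of_apply,
    mul_diagonal, transpose_apply]
  exact Finset.sum_congr rfl fun i _ => by ring

theorem slices_sum_single_tmul_matToTensor (X : Fin 3 → Matrix (Fin m) (Fin m) ℂ) :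
    slices (∑ i : Fin 3, Pi.single i 1 ⊗ₜ[ℂ] matToTensor m (X i)) = X := by
  ext k x y
  simp [slices, matToTensor, tmul_sum, tmul_smul, bb_repr_tmul, Pi.single_apply]

theorem exists_sum_tmul_eq_of_tRank (T : T3mm m) :
    ∃ (a : Fin (tRank ℂ T) → V 3) (b c : Fin (tRank ℂ T) → V m),
      T = ∑ i, a i ⊗ₜ[ℂ] (b i ⊗ₜ[ℂ] c i) :=
  Nat.sInf_mem (exists_sum_tmul_tmul_eq T)

theorem exists_tendsto_slices_of_borderRank (T : T3mm m) :
    ∃ g : ℕ → T3mm m, (∀ l, tRank ℂ (g l) ≤ borderRank m T) ∧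
      Tendsto (fun l => slices (g l)) atTop (𝓝 (slices T)) := by
  obtain ⟨g, hg_rank, hg_lim⟩ : borderRank m T ∈ {r | ∃ g : ℕ → T3mm m,
      (∀ l, tRank ℂ (g l) ≤ r) ∧
        ∀ p, Tendsto (fun l => (bb m).repr (g l) p) atTop (𝓝 ((bb m).repr T p))} :=
    Nat.sInf_mem ⟨_, fun _ => T, fun _ => le_rfl, fun _ => tendsto_const_nhds⟩
  exact ⟨g, hg_rank, tendsto_pi_nhds.2 fun k => tendsto_pi_nhds.2 fun i =>
    tendsto_pi_nhds.2 fun j => hg_lim (k, i, j)⟩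

theorem rank_strassenCommutator_slices_add_le (S : T3mm m) (h : IsUnit (slices S 0).det) :
    (strassenCommutator (slices S 0) (slices S 1) (slices S 2)).rank + 2 * m
      ≤ 2 * tRank ℂ S := by
  obtain ⟨a, b, c, hS⟩ := exists_sum_tmul_eq_of_tRank S
  have hslices : ∀ k, slices S k = (Matrix.of b)ᵀ * diagonal (fun i => a i k) * Matrix.of c :=
    fun k => (congrArg (slices · k) hS).trans (slices_sum_tmul a b c k)
  simp only [hslices] at h ⊢
  simpa using rank_strassenCommutator_diagonal_add_le (Matrix.of b)ᵀ (Matrix.of c) h _ _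

end Slices

/-- Strassen's equations: for `T = Σᵢ eᵢ ⊗ Xᵢ ∈ ℂ³ ⊗ ℂᵐ ⊗ ℂᵐ` with `X₁` invertible,
the border rank of `T` is at least
`m + ½ rank(X₁⁻¹X₂X₁⁻¹X₃ − X₁⁻¹X₃X₁⁻¹X₂)`  (stated with both sides doubled). -/
theorem strassen_equations (X : Fin 3 → Matrix (Fin m) (Fin m) ℂ) (hX : IsUnit (X 0)) :
    2 * m + Matrix.rank ((X 0)⁻¹ * X 1 * ((X 0)⁻¹ * X 2) - (X 0)⁻¹ * X 2 * ((X 0)⁻¹ * X 1))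
      ≤ 2 * borderRank m (∑ i : Fin 3, Pi.single i 1 ⊗ₜ[ℂ] matToTensor m (X i)) := by
  have hdet : IsUnit (X 0).det := (isUnit_iff_isUnit_det _).1 hX
  obtain ⟨g, hg_rank, hg_lim⟩ := exists_tendsto_slices_of_borderRank
    (∑ i : Fin 3, Pi.single i 1 ⊗ₜ[ℂ] matToTensor m (X i))
  rw [slices_sum_single_tmul_matToTensor] at hg_lim
  have hunit : ∀ᶠ l in atTop, (slices (g l) 0).det ≠ 0 :=
    (tendsto_pi_nhds.1 hg_lim 0).eventually
      ((continuous_id.matrix_det (n := Fin m)).continuousAt.eventually_ne hdet.ne_zero)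
  have hcont : Continuous fun Y : Fin 3 → Matrix (Fin m) (Fin m) ℂ =>
      strassenCommutator (Y 0) (Y 1) (Y 2) :=
    (continuous_apply 0).strassenCommutator (continuous_apply 1) (continuous_apply 2)
  have hsemi : ∀ᶠ l in atTop, (strassenCommutator (X 0) (X 1) (X 2)).rank
      ≤ (strassenCommutator (slices (g l) 0) (slices (g l) 1) (slices (g l) 2)).rank :=
    ((hcont.tendsto X).comp hg_lim).eventually (eventually_nhds_rank_le _)
  obtain ⟨l, hl_unit, hl_semi⟩ := (hunit.and hsemi).exists
  have hl_bound := rank_strassenCommutator_slices_add_le (g l) hl_unit.isUnit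
  rw [← rank_strassenCommutator_eq_rank_commutator hdet]
  have hl_rank := hg_rank l
  omega
end
end

section
/- The polynomial x^{d-1} y has symmetric rank exactly d over C for d ≥ 2. -/
/-!
Upper bound: for a primitive `d`-th root of unity `ω`, averaging `(x + ωⁱ y)^d` against `ω⁻ⁱ`
kills every monomial except `x^{d-1} y`, so `x^{d-1} y = d⁻² ∑_{i<d} ω⁻ⁱ (x + ωⁱ y)^d`.

Lower bound: applying `∂_y` to `x^{d-1} y = ∑ cᵢ ℓᵢ^d` writes `x^{d-1}` as a combination of the
`(d-1)`-th powers of the `ℓᵢ` not proportional to `x`. The derivation `ℓ₁ ∂₀ - ℓ₀ ∂₁` kills `ℓ` and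
sends `ℓ'^m` to `m (ℓ' ∧ ℓ) ℓ'^{m-1}`, so it removes one term, rescales the others and lowers
the degree by one; by induction, `w^m` is never a combination of at most `m` powers of forms
not proportional to `w`.
-/

open BigOperators

noncomputable section

/-- Symmetric rank: the minimal `r` such that `P` is a linear combination of `r` `d`-th powers
of linear forms. -/
def symRank (n d : ℕ) (P : MvPolynomial (Fin n) ℂ) : ℕ :=
  sInf {r | ∃ (c : Fin r → ℂ) (ℓ : Fin r → Fin n → ℂ),
    P = ∑ i, c i • (∑ j, MvPolynomial.C (ℓ i j) * MvPolynomial.X j) ^ d}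

open MvPolynomial

section LinearForms

variable {R : Type*} [CommRing R] {σ : Type*}

theorem Derivation.map_pow_of_eq_C (D : Derivation R (MvPolynomial σ R) (MvPolynomial σ R))
    {p : MvPolynomial σ R} {a : R} (h : D p = C a) (m : ℕ) :
    D (p ^ m) = (m * a) • p ^ (m - 1) := by
  rw [D.leibniz_pow, h, mul_smul, Nat.cast_smul_eq_nsmul, smul_eq_C_mul, smul_eq_mul, mul_comm]

variable [Fintype σ]

def linForm (v : σ → R) : MvPolynomial σ R :=
  ∑ j, C (v j) * X j

theorem eval_single_linForm [DecidableEq σ] (v : σ → R) (j : σ) :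
    eval (Pi.single j 1) (linForm v) = v j := by
  simp [linForm, Pi.single_apply]

theorem linForm_ne_zero [Nontrivial R] {v : σ → R} (hv : v ≠ 0) : linForm v ≠ 0 := by
  classical
  obtain ⟨j, hj⟩ := Function.ne_iff.mp hv
  intro h
  exact hj (by simpa [h] using (eval_single_linForm v j).symm)

theorem linForm_single_one [DecidableEq σ] (j : σ) : linForm (Pi.single j (1 : R)) = X j := by
  simp [linForm, Pi.single_apply]

theorem pderiv_linForm [DecidableEq σ] (v : σ → R) (j : σ) :
    pderiv j (linForm v) = C (v j) := by
  simp [linForm, pderiv_X, Pi.single_apply]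

end LinearForms

section Binary

variable {R : Type*} [CommRing R]

def wedge (v w : Fin 2 → R) : R :=
  v 0 * w 1 - v 1 * w 0

theorem wedge_self (v : Fin 2 → R) : wedge v v = 0 := by
  rw [wedge]; ring

def apolarDeriv (v : Fin 2 → R) : Derivation R (MvPolynomial (Fin 2) R) (MvPolynomial (Fin 2) R) :=
  v 1 • pderiv 0 - v 0 • pderiv 1

theorem apolarDeriv_linForm_pow (v w : Fin 2 → R) (m : ℕ) :
    apolarDeriv v (linForm w ^ m) = (m * wedge w v) • linForm w ^ (m - 1) := by
  refine Derivation.map_pow_of_eq_C _ ?_ m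
  simp only [apolarDeriv, Derivation.sub_apply, Derivation.smul_apply, pderiv_linForm, wedge,
    smul_eq_C_mul, map_sub, map_mul]
  ring

end Binary

section LowerBound

variable {K : Type*} [Field K] [CharZero K]

theorem lt_card_of_linForm_pow_eq_sum {ι : Type*} (c : ι → K) (ℓ : ι → Fin 2 → K)
    {w : Fin 2 → K} (hw : w ≠ 0) (s : Finset ι) (hs : ∀ i ∈ s, wedge w (ℓ i) ≠ 0) (m : ℕ)
    (h : linForm w ^ m = ∑ i ∈ s, c i • linForm (ℓ i) ^ m) : m < s.card := by
  classical
  induction s using Finset.induction_on generalizing c m with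
  | empty =>
    rw [Finset.sum_empty] at h
    exact absurd (eq_zero_of_pow_eq_zero h) (linForm_ne_zero hw)
  | insert a s ha ih =>
    rw [Finset.card_insert_of_notMem ha]
    rcases Nat.eq_zero_or_pos m with rfl | hm
    · omega
    have hwa : (m * wedge w (ℓ a) : K) ≠ 0 :=
      mul_ne_zero (by exact_mod_cast hm.ne') (hs a (Finset.mem_insert_self a s))
    have hD := congrArg (apolarDeriv (ℓ a)) h
    simp only [Finset.sum_insert ha, map_add, map_sum, Derivation.map_smul, apolarDeriv_linForm_pow,
      wedge_self, mul_zero, zero_smul, smul_zero, zero_add] at hD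
    have h' : linForm w ^ (m - 1) =
        ∑ i ∈ s, (c i * (m * wedge (ℓ i) (ℓ a)) / (m * wedge w (ℓ a))) • linForm (ℓ i) ^ (m - 1) := by
      rw [← eq_inv_smul_iff₀ hwa] at hD
      rw [hD, Finset.smul_sum]
      refine Finset.sum_congr rfl fun i _ => ?_
      rw [smul_smul, smul_smul]
      congr 1
      field_simp
    have := ih (fun i => c i * (m * wedge (ℓ i) (ℓ a)) / (m * wedge w (ℓ a)))
      (fun i hi => hs i (Finset.mem_insert_of_mem hi)) (m - 1) h'
    omega

theorem le_of_X_pow_mul_X_eq_sum {r d : ℕ} (c : Fin r → K) (ℓ : Fin r → Fin 2 → K)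
    (h : (X 0 ^ (d - 1) * X 1 : MvPolynomial (Fin 2) K) = ∑ i, c i • linForm (ℓ i) ^ d) :
    d ≤ r := by
  classical
  set s := Finset.univ.filter fun i => ℓ i 1 ≠ 0
  have hpow (i : Fin r) : pderiv 1 (linForm (ℓ i) ^ d) = (d * ℓ i 1) • linForm (ℓ i) ^ (d - 1) :=
    Derivation.map_pow_of_eq_C _ (pderiv_linForm _ _) d
  have hD := congrArg (pderiv 1) h
  simp only [map_sum, Derivation.map_smul, hpow, smul_smul] at hD
  rw [show pderiv 1 (X 0 ^ (d - 1) * X 1 : MvPolynomial (Fin 2) K) = X 0 ^ (d - 1) by simp] at hD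
  have hx : linForm (Pi.single 0 1) ^ (d - 1) =
      ∑ i ∈ s, (c i * (d * ℓ i 1)) • linForm (ℓ i) ^ (d - 1) := by
    rw [linForm_single_one, Finset.sum_filter_of_ne fun i _ hi h0 => by simp [h0] at hi]
    exact hD
  have hlt := lt_card_of_linForm_pow_eq_sum _ ℓ (Pi.single_ne_zero_iff.mpr one_ne_zero) s
    (fun i hi => by simpa [wedge] using (Finset.mem_filter.mp hi).2) (d - 1) hx
  have hs : s.card ≤ r := (Finset.card_filter_le _ _).trans (Finset.card_fin r).le
  omega

end LowerBound

section UpperBound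

variable {K : Type*} [Field K] {ω : K} {d : ℕ}

theorem IsPrimitiveRoot.geom_sum_pow_eq_zero (hω : IsPrimitiveRoot ω d) {n : ℕ} (hn : ¬d ∣ n) :
    ∑ i ∈ Finset.range d, (ω ^ n) ^ i = 0 := by
  have hne : ω ^ n - 1 ≠ 0 := sub_ne_zero.mpr fun h => hn ((hω.pow_eq_one_iff_dvd n).mp h)
  have := geom_sum_mul (ω ^ n) d
  rw [← pow_mul, mul_comm n d, pow_mul, hω.pow_eq_one, one_pow, sub_self] at this
  exact (mul_eq_zero.mp this).resolve_right hne

theorem IsPrimitiveRoot.sum_pow_pred_mul_pow (hω : IsPrimitiveRoot ω d) (hd : 2 ≤ d) {k : ℕ}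
    (hk : k ≤ d) : ∑ i : Fin d, (ω ^ (d - 1)) ^ (i : ℕ) * (ω ^ (i : ℕ)) ^ k =
      if k = 1 then (d : K) else 0 := by
  have hcollect : ∀ i : ℕ, (ω ^ (d - 1)) ^ i * (ω ^ i) ^ k = (ω ^ (d - 1 + k)) ^ i := fun i => by
    rw [← pow_mul, ← pow_mul, ← pow_mul, ← pow_add]
    ring_nf
  rw [Fin.sum_univ_eq_sum_range (fun i => (ω ^ (d - 1)) ^ i * (ω ^ i) ^ k)]
  simp only [hcollect]
  split_ifs with hk1
  · subst hk1
    simp [Nat.sub_add_cancel (by omega : 1 ≤ d), hω.pow_eq_one]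
  · refine hω.geom_sum_pow_eq_zero fun hdvd => hk1 ?_
    have := Nat.eq_of_dvd_of_lt_two_mul (by omega) hdvd (by omega)
    omega

theorem X_pow_mul_X_eq_sum_linForm_pow [CharZero K] (hω : IsPrimitiveRoot ω d) (hd : 2 ≤ d) :
    (X 0 ^ (d - 1) * X 1 : MvPolynomial (Fin 2) K) =
      ∑ i : Fin d, ((ω ^ (d - 1)) ^ (i : ℕ) / d ^ 2) • linForm ![1, ω ^ (i : ℕ)] ^ d := by
  have hd0 : (d : K) ≠ 0 := by exact_mod_cast (by omega : d ≠ 0)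
  symm
  calc ∑ i : Fin d, ((ω ^ (d - 1)) ^ (i : ℕ) / d ^ 2) • linForm ![1, ω ^ (i : ℕ)] ^ d
      = ∑ i : Fin d, ∑ k ∈ Finset.range (d + 1),
          C ((ω ^ (d - 1)) ^ (i : ℕ) * (ω ^ (i : ℕ)) ^ k * (d.choose k / d ^ 2)) *
            (X 1 ^ k * X 0 ^ (d - k)) := by
        refine Finset.sum_congr rfl fun i _ => ?_
        have hℓ : linForm ![1, ω ^ (i : ℕ)] = C (ω ^ (i : ℕ)) * X 1 + X 0 := by
          simp [linForm, Fin.sum_univ_two, add_comm]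
        rw [hℓ, add_pow, Finset.smul_sum]
        refine Finset.sum_congr rfl fun k _ => ?_
        rw [smul_eq_C_mul, ← map_natCast (C : K →+* MvPolynomial (Fin 2) K), mul_pow, ← C_pow,
          show ∀ a b c e : K, a * b * (c / e) = a / e * b * c by intros; ring, C_mul, C_mul]
        ring
    _ = ∑ k ∈ Finset.range (d + 1), C (if k = 1 then 1 else 0) * (X 1 ^ k * X 0 ^ (d - k)) := by
        rw [Finset.sum_comm]
        refine Finset.sum_congr rfl fun k hk => ?_
        rw [← Finset.sum_mul, ← map_sum, ← Finset.sum_mul,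
          hω.sum_pow_pred_mul_pow hd (Nat.lt_succ_iff.mp (Finset.mem_range.mp hk))]
        split_ifs with hk1
        · subst hk1
          rw [Nat.choose_one_right]
          field_simp
        · rw [zero_mul]
    _ = X 0 ^ (d - 1) * X 1 := by
        rw [Finset.sum_eq_single 1 (fun k _ hk => by rw [if_neg hk, C_0, zero_mul])
          (fun h => absurd (Finset.mem_range.mpr (by omega)) h)]
        rw [if_pos rfl, C_1, one_mul, pow_one, mul_comm]

end UpperBound

/-- The binary form `x^{d-1} y` has symmetric rank exactly `d` over `ℂ`, for `d ≥ 2`. -/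
theorem symRank_pow_mul (d : ℕ) (hd : 2 ≤ d) :
    symRank 2 d (MvPolynomial.X 0 ^ (d - 1) * MvPolynomial.X 1) = d := by
  have hrep := X_pow_mul_X_eq_sum_linForm_pow (Complex.isPrimitiveRoot_exp d (by omega)) hd
  refine le_antisymm (Nat.sInf_le ⟨_, _, hrep⟩) (le_csInf ⟨d, _, _, hrep⟩ ?_)
  rintro r ⟨c, ℓ, h⟩
  exact le_of_X_pow_mul_X_eq_sum c ℓ h
end
end

section
/- The determinant of an n×n matrix of variables, as a polynomial of degree n, is an irreducible polynomial. -/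
/-!
Give the variables `X (i, ·)` of one row weight 1 and all others weight 0. Every term of the
generic determinant has weight exactly 1, and over a domain weighted degrees add in products
(read them off as ordinary degrees after `X v ↦ X v * T ^ w v`). So if `det = f * g`, a row
cannot contribute variables to both factors, and neither can a column. Non-unit factors are
nonconstant, as `det` takes the value 1 at the identity matrix; if `X (i₁, j₁)` occurs in `f` and
`X (i₂, j₂)` in `g`, then `X (i₂, j₁)` occurs in neither, yet every variable occurs in `det`.
-/

namespace MvPolynomial

section WeightedGrading

variable {σ R : Type*} [CommSemiring R] (w : σ → ℕ)

noncomputable def weightedGradingHom : MvPolynomial σ R →+* Polynomial (MvPolynomial σ R) :=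
  eval₂Hom (Polynomial.C.comp C) fun v => Polynomial.C (X v) * Polynomial.X ^ w v

theorem weightedGradingHom_monomial (d : σ →₀ ℕ) (r : R) :
    weightedGradingHom w (monomial d r) =
      Polynomial.C (monomial d r) * Polynomial.X ^ Finsupp.weight w d := by
  rw [weightedGradingHom, eval₂Hom_monomial]
  simp only [RingHom.coe_comp, Function.comp_apply, Finsupp.prod, mul_pow,
    Finset.prod_mul_distrib, ← pow_mul, Finset.prod_pow_eq_pow_sum, ← Polynomial.C_pow, ← map_prod,
    ← mul_assoc, ← Polynomial.C_mul, Finsupp.weight_apply, Finsupp.sum, smul_eq_mul, mul_comm (w _)]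
  rw [monomial_eq, Finsupp.prod]

theorem coeff_weightedGradingHom (p : MvPolynomial σ R) (n : ℕ) :
    (weightedGradingHom w p).coeff n = weightedHomogeneousComponent w n p := by
  classical
  conv_lhs => rw [p.as_sum]
  simp only [map_sum, weightedGradingHom_monomial, Polynomial.finsetSum_coeff,
    Polynomial.coeff_C_mul_X_pow, weightedHomogeneousComponent_apply, Finset.sum_filter, eq_comm]

theorem weightedGradingHom_injective : Function.Injective (weightedGradingHom (R := R) w) := by
  refine Function.LeftInverse.injective (g := Polynomial.evalRingHom 1) fun p => ?_
  change ((Polynomial.evalRingHom 1).comp (weightedGradingHom w)) p = RingHom.id _ p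
  congr 1
  ext <;> simp [weightedGradingHom]

theorem natDegree_weightedGradingHom (p : MvPolynomial σ R) :
    (weightedGradingHom w p).natDegree = weightedTotalDegree w p := by
  refine le_antisymm (Polynomial.natDegree_le_iff_coeff_eq_zero.mpr fun n hn => ?_)
    (Finset.sup_le fun d hd => Polynomial.le_natDegree_of_ne_zero ?_)
  · rw [coeff_weightedGradingHom]
    exact weightedHomogeneousComponent_eq_zero _ _ (by exact_mod_cast hn)
  · classical
    rw [coeff_weightedGradingHom]
    intro h
    have := congrArg (coeff d) h
    rw [coeff_weightedHomogeneousComponent, if_pos rfl, coeff_zero] at this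
    exact mem_support_iff.mp hd this

theorem weightedTotalDegree_mul_of_isDomain [IsDomain R]
    {f g : MvPolynomial σ R} (hf : f ≠ 0) (hg : g ≠ 0) :
    weightedTotalDegree w (f * g) = weightedTotalDegree w f + weightedTotalDegree w g := by
  have hinj := weightedGradingHom_injective (R := R) w
  rw [← natDegree_weightedGradingHom, map_mul, Polynomial.natDegree_mul
    ((map_ne_zero_iff _ hinj).mpr hf) ((map_ne_zero_iff _ hinj).mpr hg),
    natDegree_weightedGradingHom, natDegree_weightedGradingHom]

variable {w}

theorem le_weightedTotalDegree_of_mem_vars {p : MvPolynomial σ R} {v : σ} (hv : v ∈ p.vars) :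
    w v ≤ weightedTotalDegree w p := by
  obtain ⟨d, hd, hvd⟩ := (mem_vars_iff_mem_support v).mp hv
  exact (Finsupp.le_weight_of_ne_zero' w (Finsupp.mem_support_iff.mp hvd)).trans
    (le_weightedTotalDegree w hd)

theorem IsWeightedHomogeneous.weightedTotalDegree_le {p : MvPolynomial σ R} {n : ℕ}
    (hp : IsWeightedHomogeneous w p n) : weightedTotalDegree w p ≤ n :=
  Finset.sup_le fun _ hd => (hp (mem_support_iff.mp hd)).le

theorem notMem_vars_of_weightedTotalDegree_mul_le_one [IsDomain R]
    {f g : MvPolynomial σ R} (hfg : f * g ≠ 0) (hle : weightedTotalDegree w (f * g) ≤ 1)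
    {u v : σ} (hu : u ∈ g.vars) (hwu : w u ≠ 0) (hwv : w v ≠ 0) : v ∉ f.vars := by
  intro hv
  rw [weightedTotalDegree_mul_of_isDomain w (left_ne_zero_of_mul hfg)
    (right_ne_zero_of_mul hfg)] at hle
  have := le_weightedTotalDegree_of_mem_vars (w := w) hu
  have := le_weightedTotalDegree_of_mem_vars (w := w) hv
  omega

end WeightedGrading

theorem vars_nonempty_of_dvd_of_isUnit_eval {σ R : Type*} [CommSemiring R]
    {f p : MvPolynomial σ R} (hfp : f ∣ p) {s : σ → R} (hs : IsUnit (eval s p))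
    (hf : ¬IsUnit f) : f.vars.Nonempty := by
  rw [Finset.nonempty_iff_ne_empty, Ne, vars_eq_empty_iff_eq_C]
  intro hC
  have hdvd := map_dvd (eval s) hfp
  rw [hC, eval_C] at hdvd
  exact hf (hC ▸ (isUnit_of_dvd_unit hdvd hs).map C)

end MvPolynomial

namespace Matrix

open MvPolynomial

variable (m R : Type*) [Fintype m] [DecidableEq m] [CommRing R]

theorem isWeightedHomogeneous_det_mvPolynomialX {w : m × m → ℕ} {n : ℕ}
    (hw : ∀ τ : Equiv.Perm m, ∑ i, w (τ i, i) = n) :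
    IsWeightedHomogeneous w (det (mvPolynomialX m m R)) n := by
  rw [← mem_weightedHomogeneousSubmodule, det_apply]
  refine Submodule.sum_mem _ fun τ _ => ?_
  rw [Units.smul_def]
  refine zsmul_mem ?_ _
  rw [mem_weightedHomogeneousSubmodule, ← hw τ]
  exact IsWeightedHomogeneous.prod _ _ _ fun i _ => isWeightedHomogeneous_X R w _

theorem not_isUnit_det_mvPolynomialX [Nontrivial R] [Nonempty m] :
    ¬IsUnit (det (mvPolynomialX m m R)) := by
  intro h
  have := h.map (eval fun v : m × m => (0 : Matrix m m R) v.1 v.2)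
  rw [RingHom.map_det, mvPolynomialX_mapMatrix_eval, det_zero] at this
  exact not_isUnit_zero this

/-- Witnessed by the permutation matrix of `swap i j`, whose row `i` vanishes once the
entry `(i, j)` is set to zero. -/
theorem mem_vars_det_mvPolynomialX [Nontrivial R] (i j : m) :
    (i, j) ∈ (det (mvPolynomialX m m R)).vars := by
  let s : m × m → R := fun v => (Equiv.swap i j).permMatrix R v.1 v.2
  have hs : det (of fun a b => s (a, b)) ≠ 0 := by
    rw [show (of fun a b => s (a, b)) = (Equiv.swap i j).permMatrix R from rfl, det_permutation]
    exact ((Equiv.Perm.sign _).isUnit.map (Int.castRingHom R)).ne_zero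
  have hs₀ : det (of fun a b => Function.update s (i, j) 0 (a, b)) = 0 := by
    refine det_eq_zero_of_row_eq_zero i fun b => ?_
    by_cases hb : b = j
    · simp [hb]
    · simp [s, Function.update_of_ne (show (i, b) ≠ (i, j) by simpa using hb),
        PEquiv.toMatrix_apply, Ne.symm hb]
  by_contra h
  refine hs ?_
  rw [← eval_det_mvPolynomialX, ← hs₀, ← eval_det_mvPolynomialX]
  refine hom_congr_vars (by ext; simp) (fun v hv _ => ?_) rfl
  simp [Function.update_of_ne (ne_of_mem_of_not_mem hv h)]

variable {m R}

theorem notMem_vars_of_mul_eq_det [IsDomain R] {w : m × m → ℕ}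
    (hw : ∀ τ : Equiv.Perm m, ∑ a, w (τ a, a) = 1) {f g : MvPolynomial (m × m) R}
    (hfg : det (mvPolynomialX m m R) = f * g) {u v : m × m} (hu : u ∈ g.vars) (hwu : w u ≠ 0)
    (hwv : w v ≠ 0) : v ∉ f.vars :=
  notMem_vars_of_weightedTotalDegree_mul_le_one (hfg ▸ det_mvPolynomialX_ne_zero m R)
    (hfg ▸ (isWeightedHomogeneous_det_mvPolynomialX m R hw).weightedTotalDegree_le) hu hwu hwv

theorem notMem_vars_of_mul_eq_det_of_mem_vars_row [IsDomain R]
    {f g : MvPolynomial (m × m) R} (hfg : det (mvPolynomialX m m R) = f * g) {i j : m}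
    (hg : (i, j) ∈ g.vars) (k : m) : (i, k) ∉ f.vars :=
  notMem_vars_of_mul_eq_det (w := fun v => if v.1 = i then 1 else 0)
    (fun τ => (Equiv.sum_comp τ fun a => if a = i then 1 else 0).trans (by simp)) hfg hg
    (by simp) (by simp)

theorem notMem_vars_of_mul_eq_det_of_mem_vars_col [IsDomain R]
    {f g : MvPolynomial (m × m) R} (hfg : det (mvPolynomialX m m R) = f * g) {i j : m}
    (hf : (i, j) ∈ f.vars) (k : m) : (k, j) ∉ g.vars :=
  notMem_vars_of_mul_eq_det (w := fun v => if v.2 = j then 1 else 0) (by simp)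
    (hfg.trans (mul_comm f g)) hf (by simp) (by simp)

variable (m R)

theorem irreducible_det_mvPolynomialX [Nonempty m] [IsDomain R] :
    Irreducible (det (mvPolynomialX m m R)) := by
  refine ⟨not_isUnit_det_mvPolynomialX m R, fun f g hfg => ?_⟩
  by_contra! hfg_units
  have hone : IsUnit (eval (fun v : m × m => (1 : Matrix m m R) v.1 v.2)
      (det (mvPolynomialX m m R))) := by
    rw [RingHom.map_det, mvPolynomialX_mapMatrix_eval, det_one]
    exact isUnit_one
  obtain ⟨⟨i₁, j₁⟩, h₁⟩ :=
    vars_nonempty_of_dvd_of_isUnit_eval (Dvd.intro g hfg.symm) hone hfg_units.1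
  obtain ⟨⟨i₂, j₂⟩, h₂⟩ :=
    vars_nonempty_of_dvd_of_isUnit_eval (Dvd.intro_left f hfg.symm) hone hfg_units.2
  have hf : (i₂, j₁) ∉ f.vars := notMem_vars_of_mul_eq_det_of_mem_vars_row hfg h₂ j₁
  have hg : (i₂, j₁) ∉ g.vars := notMem_vars_of_mul_eq_det_of_mem_vars_col hfg h₁ i₂
  have hdet : (i₂, j₁) ∈ (f * g).vars := hfg ▸ mem_vars_det_mvPolynomialX m R i₂ j₁
  exact (Finset.mem_union.mp (vars_mul f g hdet)).elim hf hg

end Matrix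

/-- The determinant of the generic `n × n` matrix of variables is an irreducible polynomial
(over `ℂ`, for `n ≥ 1`). -/
theorem det_irreducible (n : ℕ) (hn : 1 ≤ n) :
    Irreducible (Matrix.det (Matrix.of fun i j : Fin n =>
      (MvPolynomial.X (i, j) : MvPolynomial (Fin n × Fin n) ℂ))) :=
  have : Nonempty (Fin n) := ⟨⟨0, hn⟩⟩
  Matrix.irreducible_det_mvPolynomialX (Fin n) ℂ
end
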